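/- Let 0 < r < R, let z₀ ∈ ℝⁿ, and set G₁ = Bⁿ(z₀, r) and G₂ = Bⁿ(z₀, R). Then for all x, y ∈ G₁, both j_{G₁}(x,y) ≥ (R/r) · j_{G₂}(x,y) and k_{G₁}(x,y) ≥ (R/r) · k_{G₂}(x,y). -/

import Mathlib

open Set Metric

/-- The Euclidean distance from a point to the boundary of `G`. -/
noncomputable def bdist {n : ℕ} (G : Set (EuclideanSpace ℝ (Fin n)))
    (x : EuclideanSpace ℝ (Fin n)) : ℝ :=
  Metric.infDist x (frontier G)

/-- The quasihyperbolic length of a path `γ` (parametrized on `[0,1]`) in `G`. -/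
noncomputable def qhLength {n : ℕ} (G : Set (EuclideanSpace ℝ (Fin n)))
    (γ : ℝ → EuclideanSpace ℝ (Fin n)) : ℝ :=
  ∫ t in (0:ℝ)..1, ‖deriv γ t‖ / bdist G (γ t)

/-- The quasihyperbolic metric of `G`: the infimum of quasihyperbolic lengths of
paths joining `x` and `y` inside `G`. -/
noncomputable def qhDist {n : ℕ} (G : Set (EuclideanSpace ℝ (Fin n)))
    (x y : EuclideanSpace ℝ (Fin n)) : ℝ :=
  ⨅ γ : {γ : ℝ → EuclideanSpace ℝ (Fin n) // γ 0 = x ∧ γ 1 = y ∧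
      (∀ t ∈ Set.Icc (0:ℝ) 1, γ t ∈ G) ∧ ContDiffOn ℝ 1 γ (Set.Icc 0 1)},
    qhLength G γ.1

/-- The distance ratio metric of `G`. -/
noncomputable def jDist {n : ℕ} (G : Set (EuclideanSpace ℝ (Fin n)))
    (x y : EuclideanSpace ℝ (Fin n)) : ℝ :=
  Real.log (1 + dist x y / min (bdist G x) (bdist G y))

/-!
On a ball the distance to the boundary is explicit, `δ_{B(z,ρ)}(p) = ρ - |p - z|`.

For the quasihyperbolic metric this gives the pointwise bound `(R/r) δ_{B(z,r)} ≤ δ_{B(z,R)}`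
on `B(z,r)`, which integrates along every path in the small ball.

For the distance ratio metric, with `m = max(|x - z|, |y - z|)` and `d = |x - y| ≤ 2m`, one has
`s j_{B(z,s)}(x,y) = s log(1 + d/(s - m))`, and this decreases in `s > m`: by
`log t ≤ (t - 1/t)/2` its derivative is at most `d(d - 2m) / (2(s - m)(s - m + d)) ≤ 0`.
-/
theorem Real.log_le_sub_inv_div_two {x : ℝ} (hx : 1 ≤ x) : Real.log x ≤ (x - x⁻¹) / 2 := by
  rw [← Real.sinh_log (by linarith)]
  exact Real.self_le_sinh_iff.2 (Real.log_nonneg hx)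

theorem hasDerivAt_mul_log_sub_log {m d s : ℝ} (hd : 0 ≤ d) (hs : m < s) :
    HasDerivAt (fun s => s * (Real.log (s - m + d) - Real.log (s - m)))
      (Real.log (s - m + d) - Real.log (s - m) + s * ((s - m + d)⁻¹ - (s - m)⁻¹)) s := by
  have h₁ : HasDerivAt (fun s => Real.log (s - m + d)) (s - m + d)⁻¹ s := by
    simpa using (((hasDerivAt_id s).sub_const m).add_const d).log (by simp; linarith)
  have h₂ : HasDerivAt (fun s => Real.log (s - m)) (s - m)⁻¹ s := by
    simpa using ((hasDerivAt_id s).sub_const m).log (by simp; linarith)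
  simpa using (hasDerivAt_id' s).fun_mul (h₁.fun_sub h₂)

theorem antitoneOn_mul_log_one_add_div {m d : ℝ} (hd : 0 ≤ d) (hdm : d ≤ 2 * m) :
    AntitoneOn (fun s => s * Real.log (1 + d / (s - m))) (Ioi m) := by
  have hderiv := fun s (hs : s ∈ Ioi m) => hasDerivAt_mul_log_sub_log hd hs
  refine AntitoneOn.congr (antitoneOn_of_hasDerivWithinAt_nonpos (convex_Ioi m)
    (fun s hs => (hderiv s hs).continuousAt.continuousWithinAt)
    (fun s hs => (hderiv s (interior_subset hs)).hasDerivWithinAt) fun s hs => ?_) fun s hs => ?_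
  · rw [interior_Ioi] at hs
    set u := s - m
    have hu : 0 < u := sub_pos.2 hs
    have hx : 1 ≤ (u + d) / u := (one_le_div hu).2 (by linarith)
    have key : ((u + d) / u - ((u + d) / u)⁻¹) / 2 + s * ((u + d)⁻¹ - u⁻¹)
        = d * (d - 2 * m) / (2 * u * (u + d)) := by
      field_simp
      ring
    have hneg : d * (d - 2 * m) / (2 * u * (u + d)) ≤ 0 :=
      div_nonpos_of_nonpos_of_nonneg (mul_nonpos_of_nonneg_of_nonpos hd (by linarith))
        (by positivity)
    rw [← Real.log_div (by positivity) hu.ne']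
    linarith [Real.log_le_sub_inv_div_two hx]
  · have hu : 0 < s - m := sub_pos.2 hs
    rw [← Real.log_div (by positivity) hu.ne', add_div, div_self hu.ne']

section NormedSpace

variable {E : Type*} [NormedAddCommGroup E] [NormedSpace ℝ E]

theorem exists_norm_eq_one_smul_eq [Nontrivial E] (v : E) : ∃ u : E, ‖u‖ = 1 ∧ ‖v‖ • u = v := by
  by_cases hv : v = 0
  · obtain ⟨u, hu⟩ := exists_norm_eq E zero_le_one
    exact ⟨u, hu, by simp [hv]⟩
  · exact ⟨‖v‖⁻¹ • v, norm_smul_inv_norm hv, smul_inv_smul₀ (norm_ne_zero_iff.2 hv) v⟩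

theorem infDist_sphere_of_mem_closedBall [Nontrivial E] {z p : E} {ρ : ℝ}
    (hp : p ∈ closedBall z ρ) : infDist p (sphere z ρ) = ρ - dist p z := by
  rw [mem_closedBall] at hp
  apply le_antisymm
  · obtain ⟨u, hu, hpu⟩ := exists_norm_eq_one_smul_eq (p - z)
    have hq : z + ρ • u ∈ sphere z ρ := by
      simp [norm_smul, hu, dist_nonneg.trans hp]
    calc infDist p (sphere z ρ) ≤ dist p (z + ρ • u) := infDist_le_dist_of_mem hq
      _ = ‖(‖p - z‖ - ρ) • u‖ := by rw [dist_eq_norm, sub_smul, hpu]; abel_nf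
      _ = ρ - dist p z := by
        rw [norm_smul, hu, mul_one, Real.norm_eq_abs,
          abs_of_nonpos (by rwa [← dist_eq_norm, sub_nonpos]), dist_eq_norm, neg_sub]
  · rw [le_infDist (NormedSpace.sphere_nonempty.2 (dist_nonneg.trans hp))]
    intro q hq
    linarith [dist_triangle_left q z p, mem_sphere.1 hq]

theorem intervalIntegrable_norm_deriv_div {γ : ℝ → E} {w : ℝ → ℝ} {a b : ℝ} (hab : a < b)
    (hγ : ContDiffOn ℝ 1 γ (Icc a b)) (hw : ContinuousOn w (Icc a b))
    (hw₀ : ∀ t ∈ Icc a b, w t ≠ 0) :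
    IntervalIntegrable (fun t => ‖deriv γ t‖ / w t) MeasureTheory.volume a b := by
  have hcont : ContinuousOn (fun t => ‖derivWithin γ (Icc a b) t‖ / w t) (Icc a b) :=
    (hγ.continuousOn_derivWithin (uniqueDiffOn_Icc hab) le_rfl).norm.div hw hw₀
  refine (hcont.intervalIntegrable_of_Icc hab.le).congr_uIoo fun t ht => ?_
  rw [uIoo_of_le hab.le] at ht
  simp only [derivWithin_of_mem_nhds (Icc_mem_nhds ht.1 ht.2)]

end NormedSpace

section Euclidean

variable {n : ℕ}

abbrev QHPath (G : Set (EuclideanSpace ℝ (Fin n))) (x y : EuclideanSpace ℝ (Fin n)) : Type :=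
  {γ : ℝ → EuclideanSpace ℝ (Fin n) // γ 0 = x ∧ γ 1 = y ∧
    (∀ t ∈ Set.Icc (0:ℝ) 1, γ t ∈ G) ∧ ContDiffOn ℝ 1 γ (Set.Icc 0 1)}

theorem nonempty_qhPath_of_convex {G : Set (EuclideanSpace ℝ (Fin n))} (hG : Convex ℝ G)
    {x y : EuclideanSpace ℝ (Fin n)} (hx : x ∈ G) (hy : y ∈ G) : Nonempty (QHPath G x y) :=
  ⟨⟨AffineMap.lineMap x y, by simp, by simp, fun _ ht => hG.lineMap_mem hx hy ht,
    (AffineMap.contDiff_lineMap x y).contDiffOn⟩⟩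

theorem qhLength_nonneg (G : Set (EuclideanSpace ℝ (Fin n))) (γ : ℝ → EuclideanSpace ℝ (Fin n)) :
    0 ≤ qhLength G γ :=
  intervalIntegral.integral_nonneg zero_le_one fun _ _ => div_nonneg (norm_nonneg _) infDist_nonneg

theorem qhDist_le_qhLength {G : Set (EuclideanSpace ℝ (Fin n))} {x y : EuclideanSpace ℝ (Fin n)}
    (γ : QHPath G x y) : qhDist G x y ≤ qhLength G γ.1 :=
  ciInf_le ⟨0, by rintro _ ⟨γ, rfl⟩; exact qhLength_nonneg G γ.1⟩ γ

theorem intervalIntegrable_qhLength {G : Set (EuclideanSpace ℝ (Fin n))}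
    {γ : ℝ → EuclideanSpace ℝ (Fin n)} (hγ : ContDiffOn ℝ 1 γ (Icc 0 1))
    (hG : ∀ t ∈ Icc (0:ℝ) 1, 0 < bdist G (γ t)) :
    IntervalIntegrable (fun t => ‖deriv γ t‖ / bdist G (γ t)) MeasureTheory.volume 0 1 :=
  intervalIntegrable_norm_deriv_div zero_lt_one hγ
    ((continuous_infDist_pt (frontier G)).comp_continuousOn hγ.continuousOn)
    fun t ht => (hG t ht).ne'

theorem mul_qhLength_le_qhLength {G G' : Set (EuclideanSpace ℝ (Fin n))} {c : ℝ} (hc : 0 < c)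
    {γ : ℝ → EuclideanSpace ℝ (Fin n)} (hγ : ContDiffOn ℝ 1 γ (Icc 0 1))
    (hG : ∀ t ∈ Icc (0:ℝ) 1, 0 < bdist G (γ t))
    (hGG' : ∀ t ∈ Icc (0:ℝ) 1, c * bdist G (γ t) ≤ bdist G' (γ t)) :
    c * qhLength G' γ ≤ qhLength G γ := by
  have hG' t (ht : t ∈ Icc (0:ℝ) 1) : 0 < bdist G' (γ t) :=
    (mul_pos hc (hG t ht)).trans_le (hGG' t ht)
  rw [qhLength, qhLength, ← intervalIntegral.integral_const_mul]
  refine intervalIntegral.integral_mono_on zero_le_one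
    ((intervalIntegrable_qhLength hγ hG').const_mul c) (intervalIntegrable_qhLength hγ hG)
    fun t ht => ?_
  rw [mul_div_assoc', div_le_div_iff₀ (hG' t ht) (hG t ht), mul_right_comm, mul_comm ‖_‖]
  exact mul_le_mul_of_nonneg_right (hGG' t ht) (norm_nonneg _)

theorem mul_qhDist_le_qhDist_of_subset {G G' : Set (EuclideanSpace ℝ (Fin n))} (hGG' : G ⊆ G')
    {c : ℝ} (hc : 0 < c) (hG : ∀ p ∈ G, 0 < bdist G p)
    (hbdist : ∀ p ∈ G, c * bdist G p ≤ bdist G' p)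
    {x y : EuclideanSpace ℝ (Fin n)} [Nonempty (QHPath G x y)] :
    c * qhDist G' x y ≤ qhDist G x y := by
  refine le_ciInf fun ⟨γ, h₀, h₁, hmem, hγ⟩ => ?_
  calc c * qhDist G' x y ≤ c * qhLength G' γ :=
        mul_le_mul_of_nonneg_left
          (qhDist_le_qhLength ⟨γ, h₀, h₁, fun t ht => hGG' (hmem t ht), hγ⟩) hc.le
    _ ≤ qhLength G γ := mul_qhLength_le_qhLength hc hγ (fun t ht => hG _ (hmem t ht))
        fun t ht => hbdist _ (hmem t ht)

theorem bdist_ball (hn : 1 ≤ n) {ρ : ℝ} (hρ : 0 < ρ) {z p : EuclideanSpace ℝ (Fin n)}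
    (hp : p ∈ ball z ρ) : bdist (ball z ρ) p = ρ - dist p z := by
  have : Nonempty (Fin n) := ⟨⟨0, hn⟩⟩
  rw [bdist, frontier_ball z hρ.ne', infDist_sphere_of_mem_closedBall (ball_subset_closedBall hp)]

theorem bdist_ball_pos (hn : 1 ≤ n) {ρ : ℝ} (hρ : 0 < ρ) {z p : EuclideanSpace ℝ (Fin n)}
    (hp : p ∈ ball z ρ) : 0 < bdist (ball z ρ) p := by
  rw [bdist_ball hn hρ hp]
  exact sub_pos.2 (mem_ball.1 hp)

theorem div_mul_bdist_ball_le (hn : 1 ≤ n) {r R : ℝ} (hr : 0 < r) (hrR : r ≤ R)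
    {z p : EuclideanSpace ℝ (Fin n)} (hp : p ∈ ball z r) :
    R / r * bdist (ball z r) p ≤ bdist (ball z R) p := by
  rw [bdist_ball hn hr hp, bdist_ball hn (hr.trans_le hrR) (ball_subset_ball hrR hp), mul_sub,
    div_mul_cancel₀ R hr.ne']
  have : dist p z ≤ R / r * dist p z := le_mul_of_one_le_left dist_nonneg ((one_le_div hr).2 hrR)
  linarith

theorem jDist_ball (hn : 1 ≤ n) {ρ : ℝ} (hρ : 0 < ρ) {z x y : EuclideanSpace ℝ (Fin n)}
    (hx : x ∈ ball z ρ) (hy : y ∈ ball z ρ) :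
    jDist (ball z ρ) x y = Real.log (1 + dist x y / (ρ - max (dist x z) (dist y z))) := by
  rw [jDist, bdist_ball hn hρ hx, bdist_ball hn hρ hy, min_sub_sub_left]

theorem mul_jDist_ball_le (hn : 1 ≤ n) {r R : ℝ} (hr : 0 < r) (hrR : r ≤ R)
    {z x y : EuclideanSpace ℝ (Fin n)} (hx : x ∈ ball z r) (hy : y ∈ ball z r) :
    R * jDist (ball z R) x y ≤ r * jDist (ball z r) x y := by
  have hR := hr.trans_le hrR
  rw [jDist_ball hn hr hx hy, jDist_ball hn hR (ball_subset_ball hrR hx) (ball_subset_ball hrR hy)]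
  have hm : max (dist x z) (dist y z) < r := max_lt hx hy
  have hd : dist x y ≤ 2 * max (dist x z) (dist y z) := by
    linarith [dist_triangle_right x y z, le_max_left (dist x z) (dist y z),
      le_max_right (dist x z) (dist y z)]
  exact antitoneOn_mul_log_one_add_div dist_nonneg hd hm (hm.trans_le hrR) hrR

end Euclidean

theorem stmt_17 (n : ℕ) (hn : 1 ≤ n) (r R : ℝ) (hr : 0 < r) (hrR : r < R)
    (z₀ x y : EuclideanSpace ℝ (Fin n))
    (hx : x ∈ Metric.ball z₀ r) (hy : y ∈ Metric.ball z₀ r) :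
    (R / r) * jDist (Metric.ball z₀ R) x y ≤ jDist (Metric.ball z₀ r) x y ∧
    (R / r) * qhDist (Metric.ball z₀ R) x y ≤ qhDist (Metric.ball z₀ r) x y := by
  have := nonempty_qhPath_of_convex (convex_ball z₀ r) hx hy
  constructor
  · rw [div_mul_eq_mul_div, div_le_iff₀ hr, mul_comm _ r]
    exact mul_jDist_ball_le hn hr hrR.le hx hy
  · exact mul_qhDist_le_qhDist_of_subset (ball_subset_ball hrR.le) (div_pos (hr.trans hrR) hr)
      (fun p => bdist_ball_pos hn hr) fun p => div_mul_bdist_ball_le hn hr hrR.le
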